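/- arXiv:2109.04001 — 4 statements merged into one kernel-verified Lean document; each statement's English description precedes it below -/
import Mathlib

section
/- The τ-expectile is monotone: if X ≤ Z almost surely for square-integrable random variables X and Z, then the τ-expectile of X is at most the τ-expectile of Z. -/
open MeasureTheory Set

/-!
Write `φ(x, t) = τ (x - t)₊ - (1 - τ) (t - x)₊`, so that the first-order condition for `q` reads
`E[φ(X, q)] = 0`. Pointwise, `φ` is nondecreasing in `x` and decreases in `t` with slope at least
`min τ (1 - τ)`. If `r < q`, then `0 = E[φ(Z, r)] ≥ E[φ(X, r)] ≥ E[φ(X, q)] + min τ (1 - τ) (q - r)`,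
which is positive.
-/

def expectileIdent (τ x t : ℝ) : ℝ := τ * max (x - t) 0 - (1 - τ) * max (t - x) 0

section Pointwise

variable {τ : ℝ}

lemma expectileIdent_mono_left (hτ : τ ∈ Icc (0 : ℝ) 1) (t : ℝ) :
    Monotone fun x => expectileIdent τ x t := by
  intro x y hxy
  have h₁ : max (x - t) 0 ≤ max (y - t) 0 := max_le_max (by linarith) le_rfl
  have h₂ : max (t - y) 0 ≤ max (t - x) 0 := max_le_max (by linarith) le_rfl
  simp only [expectileIdent]
  nlinarith [hτ.1, hτ.2]

lemma min_mul_sub_le_expectileIdent_sub (x : ℝ) {t s : ℝ} (hts : t ≤ s) :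
    min τ (1 - τ) * (s - t) ≤ expectileIdent τ x t - expectileIdent τ x s := by
  have hτ := min_le_left τ (1 - τ)
  have hτ' := min_le_right τ (1 - τ)
  simp only [expectileIdent]
  rcases le_total x t with hxt | htx
  · rw [max_eq_right (by linarith : x - t ≤ 0), max_eq_left (by linarith : 0 ≤ t - x),
      max_eq_right (by linarith : x - s ≤ 0), max_eq_left (by linarith : 0 ≤ s - x)]
    nlinarith
  rcases le_total x s with hxs | hsx
  · rw [max_eq_left (by linarith : 0 ≤ x - t), max_eq_right (by linarith : t - x ≤ 0),
      max_eq_right (by linarith : x - s ≤ 0), max_eq_left (by linarith : 0 ≤ s - x)]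
    nlinarith
  · rw [max_eq_left (by linarith : 0 ≤ x - t), max_eq_right (by linarith : t - x ≤ 0),
      max_eq_left (by linarith : 0 ≤ x - s), max_eq_right (by linarith : s - x ≤ 0)]
    nlinarith

end Pointwise

section Integral

variable {Ω : Type*} [MeasurableSpace Ω] {μ : Measure Ω} {τ : ℝ} {X Z : Ω → ℝ}

lemma MeasureTheory.Integrable.expectileIdent [IsFiniteMeasure μ] (hX : Integrable X μ) (τ t : ℝ) :
    Integrable (fun ω => expectileIdent τ (X ω) t) μ :=
  ((hX.sub (integrable_const t)).pos_part.const_mul τ).sub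
    (((integrable_const t).sub hX).pos_part.const_mul (1 - τ))

lemma integral_expectileIdent [IsFiniteMeasure μ] (hX : Integrable X μ) (τ t : ℝ) :
    ∫ ω, expectileIdent τ (X ω) t ∂μ
      = τ * ∫ ω, max (X ω - t) 0 ∂μ - (1 - τ) * ∫ ω, max (t - X ω) 0 ∂μ := by
  rw [← integral_const_mul, ← integral_const_mul, ← integral_sub]
  · rfl
  · exact (hX.sub (integrable_const t)).pos_part.const_mul τ
  · exact ((integrable_const t).sub hX).pos_part.const_mul (1 - τ)

lemma integral_expectileIdent_mono [IsFiniteMeasure μ] (hτ : τ ∈ Icc (0 : ℝ) 1)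
    (hX : Integrable X μ) (hZ : Integrable Z μ) (hle : ∀ᵐ ω ∂μ, X ω ≤ Z ω) (t : ℝ) :
    ∫ ω, expectileIdent τ (X ω) t ∂μ ≤ ∫ ω, expectileIdent τ (Z ω) t ∂μ :=
  integral_mono_ae (hX.expectileIdent τ t) (hZ.expectileIdent τ t)
    (hle.mono fun _ hω => expectileIdent_mono_left hτ t hω)

lemma min_mul_sub_le_integral_expectileIdent_sub [IsProbabilityMeasure μ] (hX : Integrable X μ)
    {t s : ℝ} (hts : t ≤ s) :
    min τ (1 - τ) * (s - t)
      ≤ ∫ ω, expectileIdent τ (X ω) t ∂μ - ∫ ω, expectileIdent τ (X ω) s ∂μ := by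
  rw [← integral_sub (hX.expectileIdent τ t) (hX.expectileIdent τ s)]
  calc min τ (1 - τ) * (s - t) = ∫ _, min τ (1 - τ) * (s - t) ∂μ := by simp
    _ ≤ _ := integral_mono (integrable_const _)
      ((hX.expectileIdent τ t).sub (hX.expectileIdent τ s))
      fun ω => min_mul_sub_le_expectileIdent_sub (X ω) hts

end Integral

/-- Monotonicity of the τ-expectile: if X ≤ Z almost surely and q, r satisfy
the first-order conditions characterizing the τ-expectiles of X and Z respectively, then
q ≤ r. -/
theorem expectile_monotone
    {Ω : Type*} [MeasurableSpace Ω] (μ : Measure Ω) [IsProbabilityMeasure μ]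
    (τ : ℝ) (hτ : τ ∈ Set.Ioo (0 : ℝ) 1)
    (X Z : Ω → ℝ) (hX : MemLp X 2 μ) (hZ : MemLp Z 2 μ)
    (hle : ∀ᵐ ω ∂μ, X ω ≤ Z ω) (q r : ℝ)
    (hq : τ * ∫ ω, max (X ω - q) 0 ∂μ = (1 - τ) * ∫ ω, max (q - X ω) 0 ∂μ)
    (hr : τ * ∫ ω, max (Z ω - r) 0 ∂μ = (1 - τ) * ∫ ω, max (r - Z ω) 0 ∂μ) :
    q ≤ r := by
  by_contra! hrq
  have hXi := hX.integrable one_le_two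
  have hZi := hZ.integrable one_le_two
  have hXq : ∫ ω, expectileIdent τ (X ω) q ∂μ = 0 := by
    rw [integral_expectileIdent hXi, hq, sub_self]
  have hZr : ∫ ω, expectileIdent τ (Z ω) r ∂μ = 0 := by
    rw [integral_expectileIdent hZi, hr, sub_self]
  have hgap : 0 < min τ (1 - τ) * (q - r) :=
    mul_pos (lt_min hτ.1 (sub_pos.2 hτ.2)) (sub_pos.2 hrq)
  have hdecr := min_mul_sub_le_integral_expectileIdent_sub (τ := τ) hXi hrq.le
  have hmono := integral_expectileIdent_mono (Ioo_subset_Icc_self hτ) hXi hZi hle r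
  linarith
end

section
/- For τ ∈ [1/2, 1), the τ-expectile is subadditive: for square-integrable random variables X and Z, ρ̄(X+Z) ≤ ρ̄(X) + ρ̄(Z). -/
open MeasureTheory

/-!
With `φ_τ(x) = τ x⁺ - (1 - τ) x⁻ = x / 2 + (τ - 1/2) |x|`, the expectile `q` of `X` is the zero of
`q ↦ E[φ_τ(X - q)]`. For `τ ≥ 1/2` the function `φ_τ` is subadditive (triangle inequality) and has
slope at least `1 - τ`. So if `s = q + r + d` with `d > 0`, then pointwise
`φ_τ(X + Z - s) + (1 - τ) d ≤ φ_τ(X - q) + φ_τ(Z - r)`, and taking expectations gives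
`(1 - τ) d ≤ 0`, which is impossible for `τ < 1`.
-/

noncomputable def expectileScore (τ x : ℝ) : ℝ := τ * max x 0 - (1 - τ) * max (-x) 0

namespace expectileScore

variable {τ : ℝ}

theorem eq_half_add_abs (τ x : ℝ) : expectileScore τ x = x / 2 + (τ - 1 / 2) * |x| := by
  unfold expectileScore
  rcases le_total x 0 with hx | hx
  · rw [max_eq_right hx, max_eq_left (neg_nonneg.mpr hx), abs_of_nonpos hx]; ring
  · rw [max_eq_left hx, max_eq_right (neg_nonpos.mpr hx), abs_of_nonneg hx]; ring

theorem add_le (hτ : 1 / 2 ≤ τ) (x y : ℝ) :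
    expectileScore τ (x + y) ≤ expectileScore τ x + expectileScore τ y := by
  simp only [eq_half_add_abs]
  nlinarith [abs_add_le x y]

theorem sub_add_le (hτ : 1 / 2 ≤ τ) (x : ℝ) {d : ℝ} (hd : 0 ≤ d) :
    expectileScore τ (x - d) + (1 - τ) * d ≤ expectileScore τ x := by
  have h : |x - d| ≤ |x| + d := by simpa [abs_of_nonneg hd] using abs_sub x d
  simp only [eq_half_add_abs]
  nlinarith [mul_nonneg (sub_nonneg.mpr hτ) (sub_nonneg.mpr h)]

end expectileScore

section Integral

variable {Ω : Type*} [MeasurableSpace Ω] {μ : Measure Ω} {τ : ℝ} {X Z : Ω → ℝ}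

section Finite

variable [IsFiniteMeasure μ]

theorem integrable_max_sub_const (hX : Integrable X μ) (c : ℝ) :
    Integrable (fun ω => max (X ω - c) 0) μ :=
  (hX.sub (integrable_const c)).pos_part

theorem integrable_max_const_sub (hX : Integrable X μ) (c : ℝ) :
    Integrable (fun ω => max (c - X ω) 0) μ :=
  ((integrable_const c).sub hX).pos_part

theorem integral_expectileScore_sub (hX : Integrable X μ) (τ c : ℝ) :
    ∫ ω, expectileScore τ (X ω - c) ∂μ
      = τ * ∫ ω, max (X ω - c) 0 ∂μ - (1 - τ) * ∫ ω, max (c - X ω) 0 ∂μ := by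
  simp only [expectileScore, neg_sub]
  rw [integral_sub ((integrable_max_sub_const hX c).const_mul τ)
    ((integrable_max_const_sub hX c).const_mul (1 - τ)), integral_const_mul, integral_const_mul]

theorem integrable_expectileScore_sub (hX : Integrable X μ) (τ c : ℝ) :
    Integrable (fun ω => expectileScore τ (X ω - c)) μ := by
  simp only [expectileScore, neg_sub]
  exact ((integrable_max_sub_const hX c).const_mul τ).sub
    ((integrable_max_const_sub hX c).const_mul (1 - τ))

end Finite

theorem integral_expectileScore_add_sub_add_le [IsProbabilityMeasure μ] (hτ : 1 / 2 ≤ τ)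
    (hX : Integrable X μ) (hZ : Integrable Z μ) (q r : ℝ) {d : ℝ} (hd : 0 ≤ d) :
    ∫ ω, expectileScore τ (X ω + Z ω - (q + r + d)) ∂μ + (1 - τ) * d
      ≤ ∫ ω, expectileScore τ (X ω - q) ∂μ + ∫ ω, expectileScore τ (Z ω - r) ∂μ := by
  have hpointwise : ∀ ω, expectileScore τ (X ω + Z ω - (q + r + d)) + (1 - τ) * d
      ≤ expectileScore τ (X ω - q) + expectileScore τ (Z ω - r) := fun ω => by
    calc expectileScore τ (X ω + Z ω - (q + r + d)) + (1 - τ) * d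
        = expectileScore τ ((X ω - q) + (Z ω - r) - d) + (1 - τ) * d := by ring_nf
      _ ≤ expectileScore τ ((X ω - q) + (Z ω - r)) := expectileScore.sub_add_le hτ _ hd
      _ ≤ _ := expectileScore.add_le hτ _ _
  have hXq := integrable_expectileScore_sub hX τ q
  have hZr := integrable_expectileScore_sub hZ τ r
  have hXZ := integrable_expectileScore_sub (X := fun ω => X ω + Z ω) (hX.add hZ) τ (q + r + d)
  have h := integral_mono (hXZ.add (integrable_const ((1 - τ) * d))) (hXq.add hZr) hpointwise
  rwa [integral_add' hXZ (integrable_const _), integral_const, probReal_univ, one_smul,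
    integral_add' hXq hZr] at h

end Integral

/-- For τ ∈ [1/2, 1), the τ-expectile is subadditive: if q, r, s satisfy the
first-order conditions characterizing the τ-expectiles of X, Z and X + Z respectively,
then ρ̄(X+Z) ≤ ρ̄(X) + ρ̄(Z), i.e. s ≤ q + r. -/
theorem expectile_subadditive
    {Ω : Type*} [MeasurableSpace Ω] (μ : Measure Ω) [IsProbabilityMeasure μ]
    (τ : ℝ) (hτ : τ ∈ Set.Ico (1/2 : ℝ) 1)
    (X Z : Ω → ℝ) (hX : MemLp X 2 μ) (hZ : MemLp Z 2 μ) (q r s : ℝ)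
    (hq : τ * ∫ ω, max (X ω - q) 0 ∂μ = (1 - τ) * ∫ ω, max (q - X ω) 0 ∂μ)
    (hr : τ * ∫ ω, max (Z ω - r) 0 ∂μ = (1 - τ) * ∫ ω, max (r - Z ω) 0 ∂μ)
    (hs : τ * ∫ ω, max ((X ω + Z ω) - s) 0 ∂μ
        = (1 - τ) * ∫ ω, max (s - (X ω + Z ω)) 0 ∂μ) :
    s ≤ q + r := by
  obtain ⟨hτ_half, hτ_one⟩ := hτ
  have hXi : Integrable X μ := hX.integrable (by norm_num)
  have hZi : Integrable Z μ := hZ.integrable (by norm_num)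
  by_contra! hlt
  have key := integral_expectileScore_add_sub_add_le hτ_half hXi hZi q r (sub_nonneg.mpr hlt.le)
  rw [add_sub_cancel, integral_expectileScore_sub (X := fun ω => X ω + Z ω) (hXi.add hZi),
    integral_expectileScore_sub hXi, integral_expectileScore_sub hZi] at key
  nlinarith
end

section
/- Conditional expectile interchangeability: let X be a square-integrable random variable on a probability space with a sub-σ-algebra G generated by a finite measurable partition {A₁,…,A_k} with P(A_i) > 0. Define the conditional τ-expectile ρ̄(X|G) as the G-measurable random variable whose value on A_i is the τ-expectile of X under P(·|A_i). Then for any finite family of G-measurable candidate decisions, minimizing the unconditional τ-expectile of the conditional risk is achieved by pointwise (per-atom) minimization: ρ̄(min over a ∈ 𝒜 of ρ̄(X_a | G)) = min over G-measurable selections a(·) of ρ̄(ρ̄(X_{a(·)} | G)), where 𝒜 is a finite action set and X_a are square-integrable random variables indexed by actions, using monotonicity of the τ-expectile. -/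
open MeasureTheory ProbabilityTheory Set

private lemma max_sub_max_neg (x : ℝ) : max x 0 - max (-x) 0 = x := by
  rcases le_total x 0 with h | h
  · rw [max_eq_right h, max_eq_left (by linarith)]; ring
  · rw [max_eq_left h, max_eq_right (by linarith)]; ring

/-- Monotonicity of the expectile from the first-order condition. -/
private lemma expc_mono {Ω : Type*} [Fintype Ω] [MeasurableSpace Ω]
    [MeasurableSingletonClass Ω]
    (τ : ℝ) (hτ0 : 0 < τ) (hτ1 : τ < 1)
    (expc : Measure Ω → (Ω → ℝ) → ℝ)
    (ν : Measure Ω) (hν : IsProbabilityMeasure ν)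
    (hexp : ∀ Y : Ω → ℝ, τ * ∫ ω, max (Y ω - expc ν Y) 0 ∂ν
        = (1 - τ) * ∫ ω, max (expc ν Y - Y ω) 0 ∂ν)
    (Y Z : Ω → ℝ) (hYZ : ∀ ω, Y ω ≤ Z ω) : expc ν Y ≤ expc ν Z := by
  by_contra hcon
  push_neg at hcon
  set p := expc ν Z with hp
  set q := expc ν Y with hq
  have hint : ∀ f : Ω → ℝ, Integrable f ν := fun f => .of_finite
  -- key identity: ∫ (W - r)₊ - ∫ (r - W)₊ = ∫ W - r
  have key : ∀ (W : Ω → ℝ) (r : ℝ),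
      (∫ ω, max (W ω - r) 0 ∂ν) - ∫ ω, max (r - W ω) 0 ∂ν = (∫ ω, W ω ∂ν) - r := by
    intro W r
    rw [← integral_sub (hint _) (hint _)]
    have h1 : (fun ω => max (W ω - r) 0 - max (r - W ω) 0) = fun ω => W ω - r := by
      funext ω
      have := max_sub_max_neg (W ω - r)
      simpa [neg_sub] using this
    rw [h1, integral_sub (hint _) (integrable_const r), integral_const]
    simp
  have hZ := hexp Z
  have hY := hexp Y
  set I₁ := ∫ ω, max (Z ω - p) 0 ∂ν
  set I₂ := ∫ ω, max (p - Z ω) 0 ∂ν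
  set J₁ := ∫ ω, max (Z ω - q) 0 ∂ν
  set J₂ := ∫ ω, max (q - Z ω) 0 ∂ν
  set K₁ := ∫ ω, max (Y ω - q) 0 ∂ν
  set K₂ := ∫ ω, max (q - Y ω) 0 ∂ν
  have h3 : K₁ ≤ J₁ := by
    refine integral_mono (hint _) (hint _) fun ω => ?_
    exact max_le_max (by linarith [hYZ ω]) le_rfl
  have h4 : J₂ ≤ K₂ := by
    refine integral_mono (hint _) (hint _) fun ω => ?_
    exact max_le_max (by linarith [hYZ ω]) le_rfl
  have h6 : J₁ ≤ I₁ := by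
    refine integral_mono (hint _) (hint _) fun ω => ?_
    exact max_le_max (by linarith) le_rfl
  have h7 : I₂ ≤ J₂ := by
    refine integral_mono (hint _) (hint _) fun ω => ?_
    exact max_le_max (by linarith) le_rfl
  have h5 : (I₁ - J₁) + (J₂ - I₂) = q - p := by
    have e1 := key Z p
    have e2 := key Z q
    linarith
  nlinarith [mul_nonneg (mul_nonneg hτ0.le (by linarith : (0:ℝ) ≤ 1 - τ)) (by linarith : (0:ℝ) ≤ (I₁ - J₁) + (J₂ - I₂)),
    mul_nonneg hτ0.le (sub_nonneg.2 h6), mul_nonneg (by linarith : (0:ℝ) ≤ 1 - τ) (sub_nonneg.2 h7),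
    mul_le_mul_of_nonneg_left h3 hτ0.le,
    mul_le_mul_of_nonneg_left h4 (by linarith : (0:ℝ) ≤ 1 - τ),
    mul_pos (mul_pos hτ0 (by linarith : (0:ℝ) < 1 - τ)) (by linarith : (0:ℝ) < q - p)]

/-- Conditional expectile interchangeability on a finite probability space.
G is the σ-algebra generated by the finite partition given by the fibers of g, all of
positive probability. `expc ν Y` is the τ-expectile of Y under ν, characterized by the
first-order condition. The conditional τ-expectile of X_a given G is
ω ↦ expc (μ conditioned on the atom of ω) (X a). Then the expectile of the pointwise
minimum of conditional expectiles equals the minimum over G-measurable selections of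
actions of the expectile of the corresponding conditional expectile. -/
theorem conditional_expectile_interchangeability
    {Ω : Type*} [Fintype Ω] [MeasurableSpace Ω] [MeasurableSingletonClass Ω]
    (μ : Measure Ω) [IsProbabilityMeasure μ]
    (τ : ℝ) (hτ : τ ∈ Set.Ioo (0 : ℝ) 1)
    (k : ℕ) (g : Ω → Fin k) (hg : ∀ i : Fin k, μ (g ⁻¹' {i}) ≠ 0)
    (A : Type*) [Fintype A] [Nonempty A]
    (X : A → Ω → ℝ)
    (expc : Measure Ω → (Ω → ℝ) → ℝ)
    (hexp : ∀ ν : Measure Ω, IsProbabilityMeasure ν → ∀ Y : Ω → ℝ,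
      τ * ∫ ω, max (Y ω - expc ν Y) 0 ∂ν
        = (1 - τ) * ∫ ω, max (expc ν Y - Y ω) 0 ∂ν) :
    expc μ (fun ω => ⨅ a : A, expc (μ[|g ⁻¹' {g ω}]) (X a))
      = ⨅ σ : Fin k → A,
          expc μ (fun ω => expc (μ[|g ⁻¹' {g ω}]) (X (σ (g ω)))) := by
  obtain ⟨hτ0, hτ1⟩ := hτ
  set f : Fin k → A → ℝ := fun i a => expc (μ[|g ⁻¹' {i}]) (X a) with hfdef
  choose σ0 hσ0 using fun i : Fin k => Finite.exists_min (f i)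
  have hmin : ∀ ω : Ω, (⨅ a : A, f (g ω) a) = f (g ω) (σ0 (g ω)) := fun ω =>
    le_antisymm (ciInf_le (Finite.bddBelow_range _) _) (le_ciInf (hσ0 (g ω)))
  have hmono := expc_mono τ hτ0 hτ1 expc μ inferInstance (hexp μ inferInstance)
  apply le_antisymm
  · refine le_ciInf fun σ => ?_
    exact hmono _ _ fun ω => ciInf_le (Finite.bddBelow_range _) (σ (g ω))
  · refine ciInf_le_of_le (Finite.bddBelow_range _) σ0 (le_of_eq ?_)
    congr 1
    funext ω
    exact (hmin ω).symm
end

section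
/- For the two-period trinomial-tree market with S₀ = 100, three equiprobable time-1 states with S₁ ∈ {150, 100, 80}, and conditional time-2 prices {270,150,75}, {180,100,50}, {120,80,64} respectively (all nine paths equiprobable), zero interest rate, strike K = 100, and zero initial capital: the optimal value of the conditional one-period problem min over ξ̄₁ of CVaR₆₀%((S₂−K)₊ − (S₁−S₀)·ξ₀* − (S₂−S₁)·ξ̄₁ | S₁ = 100) with ξ₀* = 0.9341 is attained at ξ̄₁* = 8/13 ≈ 0.6154, which differs from the time-0 optimal plan ξ₁* ≈ 0.7665 of the static two-period CVaR₆₀% minimization. -/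
open Set

/-- The conditional time-2 prices on the middle branch (S₁ = 100), each with
probability 1/3. -/
noncomputable def midS2 : Fin 3 → ℝ := ![180, 100, 50]

/-- CVaR at level 60% of a loss over the three equiprobable conditional outcomes:
CVaR_α(X) = inf over c of c + (1/(1−α))·E[(X−c)₊]. -/
noncomputable def cvar60 (loss : Fin 3 → ℝ) : ℝ :=
  sInf {v : ℝ | ∃ c : ℝ,
    v = c + (1 / (1 - 0.6)) * ((1 / 3) * ∑ ω : Fin 3, max (loss ω - c) 0)}

/-- The writer's conditional hedging loss on the middle branch with first-period
position ξ₀* = 0.9341 and second-period position ξ̄₁: (S₂ − K)₊ − (S₁ − S₀)·ξ₀*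
− (S₂ − S₁)·ξ̄₁, with S₀ = S₁ = 100 and K = 100. -/
noncomputable def midLoss (ξ : ℝ) (ω : Fin 3) : ℝ :=
  max (midS2 ω - 100) 0 - (100 - 100) * 0.9341 - (midS2 ω - 100) * ξ

/-!
The weights `q = (5/13, 0, 8/13)` on the conditional outcomes `S₂ ∈ {180, 100, 50}` lie in the
risk envelope of CVaR₆₀% (`0 ≤ q ≤ p / (1 - α) = 5/6`) and make `S₂ − S₁` a martingale. Every
element of the envelope gives the lower bound `E_q[X] ≤ CVaR(X)`, and since `q` is a martingale
measure `E_q[midLoss ξ] = 80 · 5/13 = 400/13` does not depend on `ξ`. At `ξ = 8/13` the loss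
is `(400/13, 0, 400/13)`, so the Rockafellar–Uryasev objective at `c = 400/13` already equals
this bound.
-/

open Finset

section CVaR

variable {ι : Type*} [Fintype ι]

noncomputable def cvarObjective (α : ℝ) (p X : ι → ℝ) (c : ℝ) : ℝ :=
  c + (1 / (1 - α)) * ∑ ω, p ω * max (X ω - c) 0

noncomputable def cvar (α : ℝ) (p X : ι → ℝ) : ℝ :=
  ⨅ c, cvarObjective α p X c

theorem sum_mul_le_cvarObjective {α : ℝ} {p q : ι → ℝ} (hq : ∀ ω, 0 ≤ q ω)
    (hqp : ∀ ω, q ω ≤ p ω / (1 - α)) (hq1 : ∑ ω, q ω = 1) (X : ι → ℝ) (c : ℝ) :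
    ∑ ω, q ω * X ω ≤ cvarObjective α p X c :=
  calc ∑ ω, q ω * X ω = c + ∑ ω, q ω * (X ω - c) := by
        simp only [mul_sub, sum_sub_distrib, ← sum_mul, hq1]
        ring
    _ ≤ c + ∑ ω, q ω * max (X ω - c) 0 := by
        gcongr with ω
        exacts [hq ω, le_max_left (X ω - c) 0]
    _ ≤ c + ∑ ω, p ω / (1 - α) * max (X ω - c) 0 := by
        gcongr with ω
        exact hqp ω
    _ = cvarObjective α p X c := by
        rw [cvarObjective, mul_sum]
        congr 1
        refine sum_congr rfl fun ω _ => ?_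
        ring

theorem sum_mul_le_cvar {α : ℝ} {p q : ι → ℝ} (hq : ∀ ω, 0 ≤ q ω)
    (hqp : ∀ ω, q ω ≤ p ω / (1 - α)) (hq1 : ∑ ω, q ω = 1) (X : ι → ℝ) :
    ∑ ω, q ω * X ω ≤ cvar α p X :=
  have : Nonempty ι := univ_nonempty_iff.mp (nonempty_of_sum_ne_zero (hq1.trans_ne one_ne_zero))
  le_ciInf (sum_mul_le_cvarObjective hq hqp hq1 X)

theorem cvar_le_cvarObjective {α : ℝ} (hα₀ : 0 ≤ α) (hα₁ : α < 1) {p : ι → ℝ}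
    (hp : ∀ ω, 0 ≤ p ω) (hp1 : ∑ ω, p ω = 1) (X : ι → ℝ) (c : ℝ) :
    cvar α p X ≤ cvarObjective α p X c := by
  have hpp (ω : ι) : p ω ≤ p ω / (1 - α) := le_div_self (hp ω) (by linarith) (by linarith)
  exact ciInf_le ⟨_, forall_mem_range.2 (sum_mul_le_cvarObjective hp hpp hp1 X)⟩ c

end CVaR

theorem cvar60_eq_cvar (loss : Fin 3 → ℝ) : cvar60 loss = cvar 0.6 (fun _ => 1 / 3) loss := by
  simp only [cvar60, cvar, cvarObjective, ← mul_sum]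
  exact congrArg sInf (ext fun v => exists_congr fun c => eq_comm)

noncomputable def midMartingaleWeights : Fin 3 → ℝ := ![5 / 13, 0, 8 / 13]

theorem sum_midMartingaleWeights_mul_midLoss (ξ : ℝ) :
    ∑ ω, midMartingaleWeights ω * midLoss ξ ω = 400 / 13 := by
  simp only [midMartingaleWeights, midLoss, midS2, Fin.sum_univ_three, Matrix.cons_val_zero,
    Matrix.cons_val_one, Matrix.cons_val_two, Matrix.head_cons, Matrix.tail_cons]
  norm_num
  ring

theorem le_cvar60_midLoss (ξ : ℝ) : 400 / 13 ≤ cvar60 (midLoss ξ) := by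
  rw [cvar60_eq_cvar, ← sum_midMartingaleWeights_mul_midLoss ξ]
  refine sum_mul_le_cvar (fun ω => ?_) (fun ω => ?_) ?_ _
  · fin_cases ω <;> norm_num [midMartingaleWeights]
  · fin_cases ω <;> norm_num [midMartingaleWeights]
  · simp only [midMartingaleWeights, Fin.sum_univ_three, Matrix.cons_val_zero,
      Matrix.cons_val_one, Matrix.cons_val_two, Matrix.head_cons, Matrix.tail_cons]
    norm_num

theorem cvar60_midLoss_eight_div_thirteen_le : cvar60 (midLoss (8 / 13)) ≤ 400 / 13 := by
  rw [cvar60_eq_cvar]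
  refine (cvar_le_cvarObjective (by norm_num) (by norm_num) (fun _ => by norm_num)
    (by norm_num) _ (400 / 13)).trans_eq ?_
  simp only [cvarObjective, midLoss, midS2, Fin.sum_univ_three, Matrix.cons_val_zero,
    Matrix.cons_val_one, Matrix.cons_val_two, Matrix.head_cons, Matrix.tail_cons]
  norm_num

/-- For the two-period trinomial-tree market, the optimal value of the
conditional one-period CVaR₆₀% hedging problem given S₁ = 100 is attained at
ξ̄₁* = 8/13 ≈ 0.6154, which differs from the time-0 optimal plan ξ₁* ≈ 0.7665 of the
static two-period CVaR₆₀% minimization. -/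
theorem trinomial_conditional_cvar_minimizer :
    (∀ ξ : ℝ, cvar60 (midLoss (8 / 13)) ≤ cvar60 (midLoss ξ)) ∧
    (8 / 13 : ℝ) ≠ 0.7665 :=
  ⟨fun ξ => cvar60_midLoss_eight_div_thirteen_le.trans (le_cvar60_midLoss ξ), by norm_num⟩
end
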